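/- Let 0 < η < η₁ < 1, κ_fcd > 0, κ_bmh > 0, η₂ > 0, and Δ > 0. Let H ∈ ℝⁿ with ‖H‖ ≥ η₂·Δ, and let pred, cred, ared be real numbers satisfying pred ≥ κ_fcd·‖H‖·min{‖H‖/κ_bmh, Δ}, cred ≥ η₁·pred, and |cred − ared| ≤ η·pred. Then ared ≥ (η₁ − η)·pred ≥ (η₁ − η)·κ_fcd·η₂·min{η₂/κ_bmh, 1}·Δ² > 0. -/
import Mathlib


theorem stmt_3 {n : ℕ} (η η₁ κfcd κbmh η₂ Δ : ℝ)
    (hη : 0 < η) (hηη₁ : η < η₁) (hη₁ : η₁ < 1)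
    (hκfcd : 0 < κfcd) (hκbmh : 0 < κbmh) (hη₂ : 0 < η₂) (hΔ : 0 < Δ)
    (H : EuclideanSpace ℝ (Fin n)) (hH : ‖H‖ ≥ η₂ * Δ)
    (pred cred ared : ℝ)
    (hpred : pred ≥ κfcd * ‖H‖ * min (‖H‖ / κbmh) Δ)
    (hcred : cred ≥ η₁ * pred)
    (hacc : |cred - ared| ≤ η * pred) :
    ared ≥ (η₁ - η) * pred ∧
      (η₁ - η) * pred ≥ (η₁ - η) * κfcd * η₂ * min (η₂ / κbmh) 1 * Δ ^ 2 ∧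
      (η₁ - η) * κfcd * η₂ * min (η₂ / κbmh) 1 * Δ ^ 2 > 0 := by
  have hmin : min (η₂ / κbmh) 1 * Δ ≤ min (‖H‖ / κbmh) Δ := by
    have hd : η₂ / κbmh * Δ = η₂ * Δ / κbmh := by ring
    rcases le_total (η₂ / κbmh) 1 with h | h
    · rw [min_eq_left h]
      refine le_min ?_ (by nlinarith)
      rw [hd]
      exact div_le_div_of_nonneg_right hH hκbmh.le |>.trans_eq rfl
    · rw [min_eq_right h, one_mul]
      refine le_min ?_ le_rfl
      have hk : κbmh ≤ η₂ := (one_le_div hκbmh).mp h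
      rw [le_div_iff₀ hκbmh]
      nlinarith
  have hlow : κfcd * η₂ * min (η₂ / κbmh) 1 * Δ ^ 2 ≤ pred := by
    have h1 : κfcd * (η₂ * Δ) * (min (η₂ / κbmh) 1 * Δ) ≤ κfcd * ‖H‖ * min (‖H‖ / κbmh) Δ := by
      have hmp : 0 < min (η₂ / κbmh) 1 := lt_min (div_pos hη₂ hκbmh) one_pos
      have h2 : κfcd * (η₂ * Δ) ≤ κfcd * ‖H‖ := by nlinarith
      have h3 : 0 ≤ κfcd * (η₂ * Δ) := by positivity
      exact mul_le_mul h2 hmin (by positivity) (by positivity)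
    nlinarith [h1, hpred]
  have hmp : 0 < min (η₂ / κbmh) 1 := lt_min (div_pos hη₂ hκbmh) one_pos
  have hlpos : 0 < κfcd * η₂ * min (η₂ / κbmh) 1 * Δ ^ 2 := by positivity
  have hppos : 0 < pred := lt_of_lt_of_le hlpos hlow
  have habs := abs_le.mp hacc
  refine ⟨by nlinarith [habs.1, habs.2], by nlinarith, by nlinarith⟩
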